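/- arXiv:2012.15194 — 8 statements merged into one kernel-verified Lean document; each statement's English description precedes it below -/
import Mathlib

section
/- Let ε ∈ [0,1), let S and O be nonempty finite sets of indices, and for each index i let w_i > 0 be a weight and r_i ≥ 0 a score. For a nonempty finite set T define d(T) = Σ_{i∈T} w_i and v(T) = (Σ_{i∈T} w_i r_i) / (Σ_{i∈T} w_i). If min_{i∈S} r_i ≥ (1−ε)·r_j for every j ∈ O∖S, then v(S) ≥ (1−ε)·(d(O) / max{d(S), d(O)})·v(O). -/
open Finset

/-- comparison of weighted average scores -- if every item of `S` has score
at least `(1−ε)` times the score of every item of `O ∖ S`, then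
`v(S) ≥ (1−ε) · (d(O) / max{d(S), d(O)}) · v(O)`. -/
theorem stmt6 {ι : Type} [DecidableEq ι]
    (ε : ℝ) (hε0 : 0 ≤ ε) (hε1 : ε < 1)
    (S O : Finset ι) (hS : S.Nonempty) (hO : O.Nonempty)
    (w : ι → ℝ) (hw : ∀ i, 0 < w i)
    (r : ι → ℝ) (hr : ∀ i, 0 ≤ r i)
    (h : ∀ i ∈ S, ∀ j ∈ O \ S, (1 - ε) * r j ≤ r i) :
    (1 - ε) * ((∑ i ∈ O, w i) / max (∑ i ∈ S, w i) (∑ i ∈ O, w i)) *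
        ((∑ i ∈ O, w i * r i) / ∑ i ∈ O, w i) ≤
      (∑ i ∈ S, w i * r i) / ∑ i ∈ S, w i := by
  have hdS : 0 < ∑ i ∈ S, w i := Finset.sum_pos (fun i _ => hw i) hS
  have hdO : 0 < ∑ i ∈ O, w i := Finset.sum_pos (fun i _ => hw i) hO
  set dS := ∑ i ∈ S, w i with hdSdef
  set dO := ∑ i ∈ O, w i with hdOdef
  set M := max dS dO with hMdef
  have hM : 0 < M := lt_of_lt_of_le hdS (le_max_left _ _)
  have hMS : dS ≤ M := le_max_left _ _
  have hMO : dO ≤ M := le_max_right _ _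
  obtain ⟨i0, hi0, hmin⟩ := S.exists_min_image r hS
  set m := r i0 with hmdef
  have hm0 : 0 ≤ m := hr i0
  -- (A)
  have hA : (1 - ε) * ∑ i ∈ O, w i * r i ≤
      (∑ i ∈ O ∩ S, w i * r i) + (∑ i ∈ O \ S, w i) * m := by
    have hsplit : (∑ i ∈ O ∩ S, w i * r i) + (∑ i ∈ O \ S, w i * r i)
        = ∑ i ∈ O, w i * r i := Finset.sum_inter_add_sum_sdiff O S _
    have h1 : (1 - ε) * ∑ i ∈ O ∩ S, w i * r i ≤ ∑ i ∈ O ∩ S, w i * r i := by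
      have : 0 ≤ ∑ i ∈ O ∩ S, w i * r i :=
        Finset.sum_nonneg fun i _ => mul_nonneg (hw i).le (hr i)
      nlinarith
    have h2 : (1 - ε) * ∑ i ∈ O \ S, w i * r i ≤ (∑ i ∈ O \ S, w i) * m := by
      rw [Finset.mul_sum, Finset.sum_mul]
      apply Finset.sum_le_sum
      intro j hj
      have := h i0 hi0 j hj
      have hwj := (hw j).le
      nlinarith
    nlinarith [hsplit, h1, h2]
  -- (B)
  have hB : (∑ i ∈ O ∩ S, w i * r i) + (∑ i ∈ S \ O, w i) * m ≤ ∑ i ∈ S, w i * r i := by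
    have hsplit : (∑ i ∈ S ∩ O, w i * r i) + (∑ i ∈ S \ O, w i * r i)
        = ∑ i ∈ S, w i * r i := Finset.sum_inter_add_sum_sdiff S O _
    have hcomm : (∑ i ∈ O ∩ S, w i * r i) = ∑ i ∈ S ∩ O, w i * r i := by
      rw [Finset.inter_comm]
    have h2 : (∑ i ∈ S \ O, w i) * m ≤ ∑ i ∈ S \ O, w i * r i := by
      rw [Finset.sum_mul]
      apply Finset.sum_le_sum
      intro i hi
      have hiS : i ∈ S := (Finset.mem_sdiff.mp hi).1
      exact mul_le_mul_of_nonneg_left (hmin i hiS) (hw i).le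
    linarith
  -- (C)
  have hC : dS * m ≤ ∑ i ∈ S, w i * r i := by
    rw [hdSdef, Finset.sum_mul]
    apply Finset.sum_le_sum
    intro i hi
    exact mul_le_mul_of_nonneg_left (hmin i hi) (hw i).le
  -- (D)
  have hD : (∑ i ∈ O \ S, w i) ≤ (∑ i ∈ S \ O, w i) + (M - dS) := by
    have h1 : (∑ i ∈ O ∩ S, w i) + (∑ i ∈ O \ S, w i) = dO :=
      Finset.sum_inter_add_sum_sdiff O S _
    have h2 : (∑ i ∈ S ∩ O, w i) + (∑ i ∈ S \ O, w i) = dS :=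
      Finset.sum_inter_add_sum_sdiff S O _
    have hcomm : (∑ i ∈ O ∩ S, w i) = ∑ i ∈ S ∩ O, w i := by
      rw [Finset.inter_comm]
    linarith
  have key : (1 - ε) * (∑ i ∈ O, w i * r i) * dS ≤ M * (∑ i ∈ S, w i * r i) := by
    nlinarith [mul_le_mul_of_nonneg_left hA hdS.le,
      mul_le_mul_of_nonneg_left hB hdS.le,
      mul_le_mul_of_nonneg_left hC (sub_nonneg.mpr hMS),
      mul_le_mul_of_nonneg_right hD (mul_nonneg hdS.le hm0)]
  have heq : (1 - ε) * (dO / M) * ((∑ i ∈ O, w i * r i) / dO)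
      = (1 - ε) * (∑ i ∈ O, w i * r i) / M := by
    field_simp
  rw [heq, div_le_div_iff₀ hM hdS]
  linarith [key]
end

section
/- Suppose the value function g is monotone, continuous, and satisfies the extended diminishing returns property. Then for every real λ > 1 and every nonempty S ⊆ {1,…,n} with Σ_{i∈S} c_i ≤ B, u(S) ≤ (λ + d(S)·(1 − 1/λ)^{−1})·max_{i∈S} r_i. -/
open MeasureTheory ProbabilityTheory Finset

/-- Monotonicity of a value function on multisets of nonnegative reals. -/
def ValMonotone (g : Multiset NNReal → ℝ) : Prop :=
  ∀ ⦃s t : Multiset NNReal⦄, s ≤ t → g s ≤ g t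

/-- The diminishing returns property of a value function. -/
def DiminishingReturns (g : Multiset NNReal → ℝ) : Prop :=
  ∀ ⦃s t : Multiset NNReal⦄, s ≤ t → ∀ z : NNReal, g (z ::ₘ t) - g t ≤ g (z ::ₘ s) - g s

/-- The extended diminishing returns property of a value function. -/
def ExtendedDiminishingReturns (g : Multiset NNReal → ℝ) : Prop :=
  DiminishingReturns g ∧
    ∀ v : ℝ, (∃ s : Multiset NNReal, g s = v) →
      ∃ y : Multiset NNReal, g y = v ∧
        ∀ x : Multiset NNReal, g x ≤ v → ∀ z : NNReal, g (z ::ₘ y) - g y ≤ g (z ::ₘ x) - g x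

/-- Continuity of a value function on multisets of each fixed size. -/
def ValContinuous (g : Multiset NNReal → ℝ) : Prop :=
  ∀ m : ℕ, Continuous fun x : Fin m → NNReal => g (List.ofFn x)

/-- The value function `g` has curvature at most `α`. -/
def CurvatureLE (g : Multiset NNReal → ℝ) (α : ℝ) : Prop :=
  ∀ ⦃s t : Multiset NNReal⦄, s ≤ t → ∀ z : NNReal,
    (1 - α) * (g (z ::ₘ s) - g s) ≤ g (z ::ₘ t) - g t

/-- The stochastic utility of a set of items: `u(S) = E[g({X_i : i ∈ S})]`. -/
noncomputable def utility {Ω : Type} [MeasurableSpace Ω] (μ : Measure Ω) {n : ℕ}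
    (g : Multiset NNReal → ℝ) (X : Fin n → Ω → NNReal) (S : Finset (Fin n)) : ℝ :=
  ∫ ω, g (Multiset.map (fun i => X i ω) S.val) ∂μ

/-- The replication test score of item `i`: expected value of `g` on `k i` i.i.d. copies. -/
noncomputable def testScore {n : ℕ} (g : Multiset NNReal → ℝ)
    (P : Fin n → Measure NNReal) (k : Fin n → ℕ) (i : Fin n) : ℝ :=
  ∫ x : Fin (k i) → NNReal, g (List.ofFn x) ∂(Measure.pi fun _ => P i)

/-- The relative cost `d(S) = ∑_{i ∈ S} 1 / k_i`. -/
noncomputable def relCost {n : ℕ} (k : Fin n → ℕ) (S : Finset (Fin n)) : ℝ :=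
  ∑ i ∈ S, ((k i : ℝ))⁻¹

/-!
Call `y` an anchor at level `w` if every `x` with `g x ≤ w` has larger marginal gains than `y`.
By diminishing returns, `u(S) ≤ g y + ∑_{i ∈ S} E[g(y + {X_i}) - g y]`. Adding the `k_i`
replicas of item `i` one at a time, each new replica gains at least the anchor's gain on the
event that the replicas added so far have value `≤ w`, and this event is independent of the new
replica; if all such events have probability `≥ p`, then `p k_i E[g(y + {X_i}) - g y] ≤ r_i`.
Extended diminishing returns provides an anchor with `g y = w` at every value `w` of `g`; taking
for `w` (essentially) the largest value of `g` below `λ · max r_i`, Markov's inequality gives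
`p ≥ 1 - 1/λ`.
-/

open Filter Topology

namespace ValContinuous

variable {g : Multiset NNReal → ℝ}

theorem continuous_map_list (hg : ValContinuous g) {ι : Type*} (l : List ι) :
    Continuous fun x : ι → NNReal => g (l.map x) := by
  have h : ∀ x : ι → NNReal, l.map x = List.ofFn fun t => x (l.get t) := fun x => by
    conv_lhs => rw [← List.ofFn_get l, List.map_ofFn]
    rfl
  simp_rw [h]
  exact (hg _).comp (continuous_pi fun t => continuous_apply _)

theorem continuous_map_finset (hg : ValContinuous g) {ι : Type*} (s : Finset ι) :
    Continuous fun x : ι → NNReal => g (s.val.map x) := by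
  simpa only [← Finset.coe_toList s, Multiset.map_coe] using hg.continuous_map_list s.toList

theorem continuous_cons (hg : ValContinuous g) (y : Multiset NNReal) :
    Continuous fun z : NNReal => g (z ::ₘ y) := by
  have h : ∀ z : NNReal, z ::ₘ y = ↑(List.ofFn (Fin.cons z y.toList.get)) := fun z => by
    simp only [List.ofFn_succ, Fin.cons_zero, Fin.cons_succ, List.ofFn_get]
    rw [← Multiset.cons_coe, Multiset.coe_toList]
  simp_rw [h]
  refine (hg _).comp (continuous_pi fun j => ?_)
  induction j using Fin.cases with
  | zero => simpa using continuous_id'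
  | succ i => simpa using continuous_const

end ValContinuous

def marginal (g : Multiset NNReal → ℝ) (y : Multiset NNReal) (z : NNReal) : ℝ :=
  g (z ::ₘ y) - g y

def IsAnchor (g : Multiset NNReal → ℝ) (y : Multiset NNReal) (w : ℝ) : Prop :=
  ∀ x : Multiset NNReal, g x ≤ w → ∀ z, marginal g y z ≤ marginal g x z

section Marginal

variable {g : Multiset NNReal → ℝ}

theorem ExtendedDiminishingReturns.exists_isAnchor (hg : ExtendedDiminishingReturns g)
    (x : Multiset NNReal) : ∃ y, g y = g x ∧ IsAnchor g y (g x) :=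
  hg.2 (g x) ⟨x, rfl⟩

theorem ValMonotone.marginal_nonneg (hg : ValMonotone g) (y : Multiset NNReal) (z : NNReal) :
    0 ≤ marginal g y z :=
  sub_nonneg.2 (hg (Multiset.le_cons_self y z))

theorem DiminishingReturns.marginal_le (hg : DiminishingReturns g) (hg0 : g 0 = 0)
    (y : Multiset NNReal) (z : NNReal) : marginal g y z ≤ g {z} := by
  simpa [marginal, hg0] using hg (Multiset.zero_le y) z

theorem DiminishingReturns.le_add_sum_marginal (hg : DiminishingReturns g)
    (y t : Multiset NNReal) : g (y + t) ≤ g y + (t.map (marginal g y)).sum := by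
  induction t using Multiset.induction_on with
  | empty => simp
  | cons z t ih =>
    have := hg (Multiset.le_add_right y t) z
    rw [Multiset.add_cons, Multiset.map_cons, Multiset.sum_cons]
    simp only [marginal] at this ⊢
    linarith

theorem ValContinuous.continuous_marginal (hg : ValContinuous g) (y : Multiset NNReal) :
    Continuous (marginal g y) :=
  (hg.continuous_cons y).sub continuous_const

theorem integrable_marginal (hg0 : g 0 = 0) (hmono : ValMonotone g) (hcont : ValContinuous g)
    (hdr : DiminishingReturns g) {ν : Measure NNReal}
    (hν : Integrable (fun z => g {z}) ν) (y : Multiset NNReal) :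
    Integrable (marginal g y) ν :=
  hν.mono' (hcont.continuous_marginal y).aestronglyMeasurable <| ae_of_all _ fun z => by
    rw [Real.norm_of_nonneg (hmono.marginal_nonneg y z)]
    exact hdr.marginal_le hg0 y z

end Marginal

section Product

variable {ι α : Type*} [Fintype ι] [MeasurableSpace α] (ν : ι → Measure α)
  [∀ i, IsProbabilityMeasure (ν i)]

theorem indepFun_eval_restrict {j : ι} {s : Finset ι} (hj : j ∉ s) :
    IndepFun (fun x : ι → α => x j) s.restrict (Measure.pi ν) := by
  classical
  have h := (iIndepFun_pi (X := fun _ => id) (μ := ν) fun _ => aemeasurable_id).indepFun_finset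
    {j} s (Finset.disjoint_singleton_left.2 hj) fun i => measurable_pi_apply i
  exact h.comp (φ := fun y : ({j} : Finset ι) → α => y ⟨j, Finset.mem_singleton_self j⟩)
    (ψ := id) (by fun_prop) measurable_id

theorem setIntegral_comp_eval_restrict_preimage {j : ι} {s : Finset ι} (hj : j ∉ s)
    {f : α → ℝ} (hf : Measurable f) {B : Set ((i : s) → α)} (hB : MeasurableSet B) :
    ∫ x in s.restrict ⁻¹' B, f (x j) ∂Measure.pi ν
      = (∫ a, f a ∂ν j) * (Measure.pi ν).real (s.restrict ⁻¹' B) := by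
  have hrestrict : Measurable (s.restrict : (ι → α) → (s → α)) := Finset.measurable_restrict s
  have hind : ∀ x : ι → α, (s.restrict ⁻¹' B).indicator (fun x => f (x j)) x
      = f (x j) * B.indicator 1 (s.restrict x) := fun x => by
    by_cases hx : s.restrict x ∈ B <;> simp [hx, Set.indicator]
  rw [← integral_indicator (hrestrict hB), funext hind,
    (indepFun_eval_restrict ν hj).integral_fun_comp_mul_comp (measurable_pi_apply j).aemeasurable
      hrestrict.aemeasurable hf.aestronglyMeasurable
      ((measurable_one.indicator hB).aestronglyMeasurable),
    integral_comp_eval hf.aestronglyMeasurable]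
  congr 1
  rw [← integral_indicator_one (hrestrict hB)]
  rfl

end Product

theorem Finset.map_restrict_univ_val {ι β : Type*} (s : Finset ι) (x : ι → β) :
    (Finset.univ : Finset s).val.map (s.restrict x) = s.val.map x := by
  rw [Finset.univ_eq_attach, Finset.attach_val]
  exact Multiset.attach_map_val' s.val x

section ItemBound

variable {g : Multiset NNReal → ℝ} {ι : Type*}

theorem IsAnchor.add_indicator_le_map_insert [DecidableEq ι] {y : Multiset NNReal} {w : ℝ}
    (hy : IsAnchor g y w) (hmono : ValMonotone g) {j : ι} {s : Finset ι} (hj : j ∉ s)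
    (x : ι → NNReal) :
    g (s.val.map x) + {x | g (s.val.map x) ≤ w}.indicator (fun x => marginal g y (x j)) x
      ≤ g ((insert j s).val.map x) := by
  rw [Finset.insert_val_of_notMem hj, Multiset.map_cons]
  by_cases hx : x ∈ {x : ι → NNReal | g (s.val.map x) ≤ w}
  · rw [Set.indicator_of_mem hx]
    have := hy _ hx (x j)
    simp only [marginal] at this ⊢
    linarith
  · rw [Set.indicator_of_notMem hx, add_zero]
    exact hmono (Multiset.le_cons_self _ _)

variable [Fintype ι]

theorem ValMonotone.map_finset_le_map_univ (hmono : ValMonotone g) (s : Finset ι)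
    (x : ι → NNReal) : g (s.val.map x) ≤ g (Finset.univ.val.map x) :=
  hmono (Multiset.map_le_map (Finset.val_le_iff.2 s.subset_univ))

theorem ValMonotone.integrable_map_finset (hmono : ValMonotone g) (hgnn : ∀ s, 0 ≤ g s)
    (hcont : ValContinuous g) {π : Measure (ι → NNReal)}
    (hint : Integrable (fun x => g (Finset.univ.val.map x)) π) (s : Finset ι) :
    Integrable (fun x => g (s.val.map x)) π :=
  hint.mono' (hcont.continuous_map_finset s).aestronglyMeasurable <| ae_of_all _ fun x => by
    rw [Real.norm_of_nonneg (hgnn _)]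
    exact hmono.map_finset_le_map_univ s x

theorem IsAnchor.mul_card_mul_integral_marginal_le [DecidableEq ι] {y : Multiset NNReal}
    {w p : ℝ} (hy : IsAnchor g y w) (hgnn : ∀ s, 0 ≤ g s) (hmono : ValMonotone g)
    (hcont : ValContinuous g) (ν : Measure NNReal) [IsProbabilityMeasure ν]
    (hint : Integrable (fun x : ι → NNReal => g (Finset.univ.val.map x)) (Measure.pi fun _ => ν))
    (hM : Integrable (marginal g y) ν)
    (hp : ∀ s : Finset ι, p ≤ (Measure.pi fun _ => ν).real {x | g (s.val.map x) ≤ w})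
    (s : Finset ι) :
    p * #s * ∫ z, marginal g y z ∂ν ≤ ∫ x, g (s.val.map x) ∂Measure.pi fun _ => ν := by
  set π := Measure.pi fun _ : ι => ν
  have hints := hmono.integrable_map_finset hgnn hcont hint
  induction s using Finset.induction_on with
  | empty => simpa [π] using hgnn 0
  | insert j s hj ih =>
    set E := {x : ι → NNReal | g (s.val.map x) ≤ w}
    have hE : E = s.restrict ⁻¹' {y | g (Finset.univ.val.map y) ≤ w} := by
      ext x
      simp only [E, Set.mem_ofPred_eq, Set.mem_preimage, Finset.map_restrict_univ_val]
    have hEm : MeasurableSet E := measurableSet_le (hcont.continuous_map_finset s).measurable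
      measurable_const
    have hset : ∫ x in E, marginal g y (x j) ∂π = (∫ z, marginal g y z ∂ν) * π.real E := by
      rw [hE]
      exact setIntegral_comp_eval_restrict_preimage (fun _ => ν) hj
        (hcont.continuous_marginal y).measurable
        (measurableSet_le (hcont.continuous_map_finset _).measurable measurable_const)
    have hindInt : Integrable (E.indicator fun x => marginal g y (x j)) π :=
      (integrable_comp_eval (μ := fun _ => ν) hM).indicator hEm
    calc p * #(insert j s) * ∫ z, marginal g y z ∂ν
        = p * #s * ∫ z, marginal g y z ∂ν + (∫ z, marginal g y z ∂ν) * p := by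
          rw [Finset.card_insert_of_notMem hj]
          push_cast
          ring
      _ ≤ ∫ x, g (s.val.map x) ∂π + ∫ x in E, marginal g y (x j) ∂π := by
          rw [hset]
          gcongr
          · exact integral_nonneg (hmono.marginal_nonneg y)
          · exact hp s
      _ = ∫ x, g (s.val.map x) + E.indicator (fun x => marginal g y (x j)) x ∂π := by
          rw [integral_add (hints s) hindInt, integral_indicator hEm]
      _ ≤ ∫ x, g ((insert j s).val.map x) ∂π :=
          integral_mono ((hints s).add hindInt) (hints _)
            (hy.add_indicator_le_map_insert hmono hj)

end ItemBound

section Utility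

variable {Ω : Type} [MeasurableSpace Ω] (μ : Measure Ω) [IsProbabilityMeasure μ] {n : ℕ}
  {X : Fin n → Ω → NNReal} {P : Fin n → Measure NNReal} {g : Multiset NNReal → ℝ}

theorem utility_le_add_sum_integral_marginal (hXmeas : ∀ i, Measurable (X i))
    (hlaw : ∀ i, μ.map (X i) = P i) (hmono : ValMonotone g) (hdr : DiminishingReturns g)
    {S : Finset (Fin n)} (hS : Integrable (fun ω => g (S.val.map fun i => X i ω)) μ)
    {y : Multiset NNReal} (hM : ∀ i, Integrable (marginal g y) (P i)) :
    utility μ g X S ≤ g y + ∑ i ∈ S, ∫ z, marginal g y z ∂P i := by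
  have hMmap : ∀ i, Integrable (marginal g y) (μ.map (X i)) := fun i => (hlaw i).symm ▸ hM i
  have hMX : ∀ i, Integrable (fun ω => marginal g y (X i ω)) μ := fun i =>
    (hMmap i).comp_measurable (hXmeas i)
  have hpoint : ∀ ω, g (S.val.map fun i => X i ω) ≤ g y + ∑ i ∈ S, marginal g y (X i ω) :=
    fun ω => (hmono (Multiset.le_add_left _ _)).trans <|
      (hdr.le_add_sum_marginal y _).trans_eq (by rw [Multiset.map_map]; rfl)
  calc utility μ g X S ≤ ∫ ω, g y + ∑ i ∈ S, marginal g y (X i ω) ∂μ :=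
        integral_mono hS ((integrable_const _).add (integrable_finsetSum S fun i _ => hMX i))
          hpoint
    _ = g y + ∑ i ∈ S, ∫ z, marginal g y z ∂P i := by
        rw [integral_add (integrable_const _) (integrable_finsetSum S fun i _ => hMX i),
          integral_const, integral_finsetSum S fun i _ => hMX i]
        simp only [probReal_univ, one_smul]
        refine congrArg _ (Finset.sum_congr rfl fun i _ => ?_)
        rw [← hlaw i, integral_map (hXmeas i).aemeasurable (hMmap i).aestronglyMeasurable]

end Utility

section Anchor

variable {Ω : Type} [MeasurableSpace Ω] {μ : Measure Ω} {n : ℕ}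
  {X : Fin n → Ω → NNReal} {P : Fin n → Measure NNReal} {g : Multiset NNReal → ℝ}

theorem integrable_marginal_of_utility (hXmeas : ∀ i, Measurable (X i))
    (hlaw : ∀ i, μ.map (X i) = P i) (hg0 : g 0 = 0) (hmono : ValMonotone g)
    (hcont : ValContinuous g) (hdr : DiminishingReturns g)
    (hIntu : ∀ S : Finset (Fin n), Integrable (fun ω => g (S.val.map fun i => X i ω)) μ)
    (y : Multiset NNReal) (i : Fin n) : Integrable (marginal g y) (P i) := by
  refine integrable_marginal hg0 hmono hcont hdr ?_ y
  rw [← hlaw i, integrable_map_measure _ (hXmeas i).aemeasurable]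
  · simpa [Function.comp_def] using hIntu {i}
  · exact (hcont.continuous_cons 0).aestronglyMeasurable

variable [IsProbabilityMeasure μ] [∀ i, IsProbabilityMeasure (P i)]

theorem IsAnchor.utility_le {y : Multiset NNReal} {w : ℝ} (hy : IsAnchor g y w)
    (hXmeas : ∀ i, Measurable (X i)) (hlaw : ∀ i, μ.map (X i) = P i) (hg0 : g 0 = 0)
    (hgnn : ∀ s, 0 ≤ g s) (hmono : ValMonotone g) (hcont : ValContinuous g)
    (hdr : DiminishingReturns g)
    (hIntu : ∀ S : Finset (Fin n), Integrable (fun ω => g (S.val.map fun i => X i ω)) μ)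
    {k : Fin n → ℕ} (hk : ∀ i, 0 < k i)
    (hIntr : ∀ i, Integrable (fun x : Fin (k i) → NNReal => g (List.ofFn x))
      (Measure.pi fun _ => P i))
    {S : Finset (Fin n)} (hS : S.Nonempty) {p : ℝ} (hp : 0 < p)
    (hprob : ∀ i ∈ S, ∀ s : Finset (Fin (k i)),
      p ≤ (Measure.pi fun _ => P i).real {x | g (s.val.map x) ≤ w}) :
    utility μ g X S ≤ g y + p⁻¹ * (relCost k S * S.sup' hS (testScore g P k)) := by
  set r := S.sup' hS (testScore g P k)
  have hM := integrable_marginal_of_utility hXmeas hlaw hg0 hmono hcont hdr hIntu y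
  have hitem : ∀ i ∈ S, ∫ z, marginal g y z ∂P i ≤ p⁻¹ * ((k i : ℝ)⁻¹ * r) := by
    intro i hi
    have hki : (0 : ℝ) < k i := Nat.cast_pos.2 (hk i)
    have h := hy.mul_card_mul_integral_marginal_le hgnn hmono hcont (P i)
      (by simpa using hIntr i) (hM i) (hprob i hi) Finset.univ
    simp only [Finset.card_univ, Fintype.card_fin, Fin.univ_val_map] at h
    calc ∫ z, marginal g y z ∂P i = (p * k i)⁻¹ * (p * k i * ∫ z, marginal g y z ∂P i) := by
          field_simp
      _ ≤ (p * k i)⁻¹ * r := by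
          gcongr
          exact h.trans (Finset.le_sup' (testScore g P k) hi)
      _ = p⁻¹ * ((k i : ℝ)⁻¹ * r) := by ring
  calc utility μ g X S ≤ g y + ∑ i ∈ S, ∫ z, marginal g y z ∂P i :=
        utility_le_add_sum_integral_marginal μ hXmeas hlaw hmono hdr (hIntu S) hM
    _ ≤ g y + ∑ i ∈ S, p⁻¹ * ((k i : ℝ)⁻¹ * r) := by gcongr with i hi; exact hitem i hi
    _ = g y + p⁻¹ * (relCost k S * r) := by
        rw [relCost, ← Finset.mul_sum, Finset.sum_mul]

end Anchor

theorem one_sub_inv_le_measureReal_le {α : Type*} [MeasurableSpace α] {π : Measure α}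
    [IsProbabilityMeasure π] {G : α → ℝ} (hG : 0 ≤ G) (hGm : Measurable G)
    (hGi : Integrable G π) {c A : ℝ} (hc : 0 < c) (hA : c * ∫ x, G x ∂π ≤ A) :
    1 - c⁻¹ ≤ π.real {x | G x ≤ A} := by
  have hcompl : {x | G x ≤ A} = {x | A < G x}ᶜ := by ext; simp
  rw [hcompl, probReal_compl_eq_one_sub (measurableSet_lt measurable_const hGm)]
  suffices π.real {x | A < G x} ≤ c⁻¹ by linarith
  have hGint := integral_nonneg (μ := π) hG
  rcases (mul_nonneg hc.le hGint).trans hA |>.eq_or_lt with hA0 | hA0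
  · have hzero : G =ᵐ[π] 0 := (integral_eq_zero_iff_of_nonneg hG hGi).1 <| by
      nlinarith
    have hnull : π {x | A < G x} = 0 := by
      have hae : ∀ᵐ x ∂π, ¬ A < G x :=
        hzero.mono fun x (hx : G x = 0) => by rw [hx, ← hA0]; simp
      simpa using ae_iff.1 hae
    simp [measureReal_def, hnull, hc.le]
  · have hmarkov := mul_meas_ge_le_integral_of_nonneg (ae_of_all _ hG) hGi A
    have hsub : π.real {x | A < G x} ≤ π.real {x | A ≤ G x} :=
      measureReal_mono fun x (hx : A < G x) => hx.le
    have : π.real {x | A < G x} * c * A ≤ 1 * A := by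
      nlinarith [mul_le_mul_of_nonneg_left hsub (mul_pos hc hA0).le]
    rw [← one_div, le_div_iff₀ hc]
    exact le_of_mul_le_mul_right this hA0

theorem ValMonotone.one_sub_inv_le_measureReal_map_finset_le {g : Multiset NNReal → ℝ}
    {ι : Type*} [Fintype ι] (hmono : ValMonotone g) (hgnn : ∀ s, 0 ≤ g s)
    (hcont : ValContinuous g) {π : Measure (ι → NNReal)} [IsProbabilityMeasure π]
    (hint : Integrable (fun x => g (Finset.univ.val.map x)) π) {c A : ℝ} (hc : 0 < c)
    (hA : c * ∫ x, g (Finset.univ.val.map x) ∂π ≤ A) (s : Finset ι) :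
    1 - c⁻¹ ≤ π.real {x | g (s.val.map x) ≤ A} := by
  refine one_sub_inv_le_measureReal_le (fun _ => hgnn _)
    (hcont.continuous_map_finset s).measurable (hmono.integrable_map_finset hgnn hcont hint s) hc
    (le_trans ?_ hA)
  exact mul_le_mul_of_nonneg_left (integral_mono (hmono.integrable_map_finset hgnn hcont hint s)
    hint (hmono.map_finset_le_map_univ s)) hc.le

theorem Set.exists_monotone_seq_mem_eventually_ge {T : Set ℝ} (hne : T.Nonempty)
    (hbdd : BddAbove T) :
    ∃ v : ℕ → ℝ, Monotone v ∧ (∀ m, v m ∈ T) ∧ ∀ t ∈ T, ∀ᶠ m in atTop, t ≤ v m := by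
  by_cases hmem : sSup T ∈ T
  · exact ⟨fun _ => sSup T, monotone_const, fun _ => hmem,
      fun t ht => Eventually.of_forall fun _ => le_csSup hbdd ht⟩
  obtain ⟨v, hmono, hlim, hvT⟩ := exists_seq_tendsto_sSup hne hbdd
  refine ⟨v, hmono, hvT, fun t ht => ?_⟩
  have hlt : t < sSup T := (le_csSup hbdd ht).lt_of_ne fun h => hmem (h ▸ ht)
  exact (hlim.eventually (lt_mem_nhds hlt)).mono fun _ => le_of_lt

theorem eventually_lt_measureReal_of_subset_iUnion {α : Type*} [MeasurableSpace α]
    {π : Measure α} [IsFiniteMeasure π] {E : ℕ → Set α} (hE : Monotone E) {F : Set α}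
    (hF : F ⊆ ⋃ m, E m) {p : ℝ} (hp : p < π.real F) : ∀ᶠ m in atTop, p < π.real (E m) := by
  have hlim :=
    (ENNReal.tendsto_toReal (measure_ne_top π _)).comp (tendsto_measure_iUnion_atTop hE)
  exact (hlim.eventually (lt_mem_nhds (hp.trans_le (measureReal_mono hF)))).mono fun _ h => h

section Level

variable {Ω : Type} [MeasurableSpace Ω] {μ : Measure Ω} [IsProbabilityMeasure μ] {n : ℕ}
  {X : Fin n → Ω → NNReal} {P : Fin n → Measure NNReal} [∀ i, IsProbabilityMeasure (P i)]
  {g : Multiset NNReal → ℝ}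

/-- The extended diminishing returns property supplies anchors only at values of `g`; the
largest value below `A` need not be attained, so we approach it from below and let `p ↑ q`. -/
theorem utility_le_of_le_measureReal (hedr : ExtendedDiminishingReturns g)
    (hXmeas : ∀ i, Measurable (X i)) (hlaw : ∀ i, μ.map (X i) = P i) (hg0 : g 0 = 0)
    (hgnn : ∀ s, 0 ≤ g s) (hmono : ValMonotone g) (hcont : ValContinuous g)
    (hIntu : ∀ S : Finset (Fin n), Integrable (fun ω => g (S.val.map fun i => X i ω)) μ)
    {k : Fin n → ℕ} (hk : ∀ i, 0 < k i)
    (hIntr : ∀ i, Integrable (fun x : Fin (k i) → NNReal => g (List.ofFn x))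
      (Measure.pi fun _ => P i))
    {S : Finset (Fin n)} (hS : S.Nonempty) {A q : ℝ} (hA : 0 ≤ A) (hq : 0 < q)
    (hprob : ∀ i ∈ S, ∀ s : Finset (Fin (k i)),
      q ≤ (Measure.pi fun _ => P i).real {x | g (s.val.map x) ≤ A}) :
    utility μ g X S ≤ A + q⁻¹ * (relCost k S * S.sup' hS (testScore g P k)) := by
  set C := relCost k S * S.sup' hS (testScore g P k)
  obtain ⟨v, hvmono, hvT, hvev⟩ := Set.exists_monotone_seq_mem_eventually_ge
    (T := Set.range g ∩ Set.Iic A) ⟨0, ⟨0, hg0⟩, hA⟩ ⟨A, fun _ h => h.2⟩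
  have hbound : ∀ p ∈ Set.Ioo 0 q, utility μ g X S ≤ A + p⁻¹ * C := by
    rintro p ⟨hp0, hpq⟩
    have hev : ∀ᶠ m in atTop, ∀ i ∈ S, ∀ s : Finset (Fin (k i)),
        p < (Measure.pi fun _ => P i).real {x | g (s.val.map x) ≤ v m} := by
      simp only [eventually_all_finset, eventually_all]
      intro i hi s
      refine eventually_lt_measureReal_of_subset_iUnion
        (E := fun m => {x | g (s.val.map x) ≤ v m})
        (fun a b hab x (hx : _ ≤ v a) => hx.trans (hvmono hab)) (fun x hx => ?_)
        (hpq.trans_le (hprob i hi s))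
      exact Set.mem_iUnion.2 (hvev _ ⟨⟨_, rfl⟩, hx⟩).exists
    obtain ⟨m, hm⟩ := hev.exists
    obtain ⟨⟨x, hx⟩, hvA⟩ := hvT m
    obtain ⟨y, hyx, hy⟩ := hedr.exists_isAnchor x
    rw [hx] at hyx hy
    have := hy.utility_le hXmeas hlaw hg0 hgnn hmono hcont hedr.1 hIntu hk hIntr hS hp0
      fun i hi s => (hm i hi s).le
    linarith [hvA.out]
  have hlim : Tendsto (fun p => A + p⁻¹ * C) (𝓝[<] q) (𝓝 (A + q⁻¹ * C)) :=
    (((tendsto_inv₀ hq.ne').mono_left nhdsWithin_le_nhds).mul_const C).const_add A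
  exact ge_of_tendsto hlim (eventually_of_mem (Ioo_mem_nhdsLT hq) hbound)

end Level

theorem stmt10_general {Ω : Type} [MeasurableSpace Ω] (μ : Measure Ω) [IsProbabilityMeasure μ]
    {n : ℕ}
    (c : Fin n → ℝ) (B : ℝ) (hc : ∀ i, 0 < c i) (hcB : ∀ i, c i ≤ B)
    (k : Fin n → ℕ) (hk : ∀ i, k i = ⌊B / c i⌋₊)
    (X : Fin n → Ω → NNReal) (hXmeas : ∀ i, Measurable (X i))
    (P : Fin n → Measure NNReal) [∀ i, IsProbabilityMeasure (P i)]
    (hlaw : ∀ i, μ.map (X i) = P i)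
    (g : Multiset NNReal → ℝ) (hg0 : g 0 = 0) (hgnn : ∀ s, 0 ≤ g s)
    (hmono : ValMonotone g) (hcont : ValContinuous g)
    (hedr : ExtendedDiminishingReturns g)
    (hIntu : ∀ S : Finset (Fin n),
      Integrable (fun ω => g (Multiset.map (fun i => X i ω) S.val)) μ)
    (hIntr : ∀ i, Integrable (fun x : Fin (k i) → NNReal => g (List.ofFn x))
      (Measure.pi fun _ => P i)) :
    ∀ lam : ℝ, 1 < lam →
      ∀ S : Finset (Fin n), ∀ hS : S.Nonempty, ∑ i ∈ S, c i ≤ B →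
        utility μ g X S ≤
          (lam + relCost k S * (1 - 1 / lam)⁻¹) * S.sup' hS (testScore g P k) := by
  intro lam hlam S hS _
  set r := S.sup' hS (testScore g P k)
  have hk0 : ∀ i, 0 < k i := fun i => by
    rw [hk i]
    exact Nat.floor_pos.2 ((one_le_div (hc i)).2 (hcB i))
  have hr : 0 ≤ r := (integral_nonneg fun _ => hgnn _).trans
    (Finset.le_sup' (testScore g P k) hS.choose_spec)
  have hprob : ∀ i ∈ S, ∀ s : Finset (Fin (k i)),
      1 - lam⁻¹ ≤ (Measure.pi fun _ => P i).real {x | g (s.val.map x) ≤ lam * r} :=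
    fun i hi => hmono.one_sub_inv_le_measureReal_map_finset_le hgnn hcont
      (by simpa using hIntr i) (by linarith) <| by
        simp only [Fin.univ_val_map]
        exact mul_le_mul_of_nonneg_left (Finset.le_sup' (testScore g P k) hi) (by linarith)
  calc utility μ g X S ≤ lam * r + (1 - lam⁻¹)⁻¹ * (relCost k S * r) :=
        utility_le_of_le_measureReal hedr hXmeas hlaw hg0 hgnn hmono hcont hIntu hk0 hIntr hS
          (by positivity) (sub_pos.2 (inv_lt_one_of_one_lt₀ hlam)) hprob
    _ = _ := by rw [one_div]; ring

/-- for every `λ > 1`, the utility of a feasible set is at most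
`(λ + d(S)·(1 − 1/λ)⁻¹)` times the maximum replication test score. -/
theorem stmt10 {Ω : Type} [MeasurableSpace Ω] (μ : Measure Ω) [IsProbabilityMeasure μ]
    {n : ℕ} (hn : 1 ≤ n)
    (c : Fin n → ℝ) (B : ℝ) (hB : 0 < B) (hc : ∀ i, 0 < c i) (hcB : ∀ i, c i ≤ B)
    (k : Fin n → ℕ) (hk : ∀ i, k i = ⌊B / c i⌋₊)
    (X : Fin n → Ω → NNReal) (hXmeas : ∀ i, Measurable (X i))
    (P : Fin n → Measure NNReal) [∀ i, IsProbabilityMeasure (P i)]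
    (hlaw : ∀ i, μ.map (X i) = P i)
    (hindep : iIndepFun X μ)
    (g : Multiset NNReal → ℝ) (hg0 : g 0 = 0) (hgnn : ∀ s, 0 ≤ g s)
    (hmono : ValMonotone g) (hcont : ValContinuous g)
    (hedr : ExtendedDiminishingReturns g)
    (hIntu : ∀ S : Finset (Fin n),
      Integrable (fun ω => g (Multiset.map (fun i => X i ω) S.val)) μ)
    (hIntr : ∀ i, Integrable (fun x : Fin (k i) → NNReal => g (List.ofFn x))
      (Measure.pi fun _ => P i)) :
    ∀ lam : ℝ, 1 < lam →
      ∀ S : Finset (Fin n), ∀ hS : S.Nonempty, ∑ i ∈ S, c i ≤ B →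
        utility μ g X S ≤
          (lam + relCost k S * (1 - 1 / lam)⁻¹) * S.sup' hS (testScore g P k) :=
  stmt10_general μ c B hc hcB k hk X hXmeas P hlaw g hg0 hgnn hmono hcont hedr hIntu hIntr
end

section
/- Let B > 0 and let c_1, …, c_n > 0 be item costs. For every S ⊆ {1,…,n} with Σ_{i∈S} c_i ≤ B, it holds that Σ_{i∈S} 1/⌊B/c_i⌋ ≤ 1.7. -/
open Finset

/-- Per-element bound: if the floor is at least `m`, then the inverse of the floor is at most
`((m+1)/m) * (c i / B)`. -/
lemma stmt11_key {n : ℕ} (B : ℝ) (hB : 0 < B) (c : Fin n → ℝ) (hc : ∀ i, 0 < c i)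
    (m : ℕ) (hm : 0 < m) (i : Fin n) (hmi : m ≤ ⌊B / c i⌋₊) :
    ((⌊B / c i⌋₊ : ℝ))⁻¹ ≤ ((m + 1) / m) * (c i / B) := by
  set x := B / c i with hx
  have hx0 : 0 < x := div_pos hB (hc i)
  have hxk : x < ⌊x⌋₊ + 1 := Nat.lt_floor_add_one x
  have hk0 : 0 < (⌊x⌋₊ : ℝ) := by
    have : 0 < ⌊x⌋₊ := lt_of_lt_of_le hm hmi
    exact_mod_cast this
  have hm0 : 0 < (m : ℝ) := by exact_mod_cast hm
  have hmk : (m : ℝ) ≤ (⌊x⌋₊ : ℝ) := by exact_mod_cast hmi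
  have hcB : c i / B = x⁻¹ := by
    rw [hx]
    field_simp
  rw [hcB]
  have hmx : (m : ℝ) * x ≤ ((m : ℝ) + 1) * (⌊x⌋₊ : ℝ) := by nlinarith
  rw [inv_eq_one_div, inv_eq_one_div, div_mul_div_comm, mul_one,
    div_le_div_iff₀ hk0 (by positivity)]
  nlinarith

/-- Sum version of the key bound over a subset where all floors are at least `m`. -/
lemma stmt11_sum {n : ℕ} (B : ℝ) (hB : 0 < B) (c : Fin n → ℝ) (hc : ∀ i, 0 < c i)
    (m : ℕ) (hm : 0 < m) (T : Finset (Fin n)) (hT : ∀ i ∈ T, m ≤ ⌊B / c i⌋₊) :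
    ∑ i ∈ T, ((⌊B / c i⌋₊ : ℝ))⁻¹ ≤ ((m + 1) / m) * ((∑ i ∈ T, c i) / B) := by
  calc ∑ i ∈ T, ((⌊B / c i⌋₊ : ℝ))⁻¹
      ≤ ∑ i ∈ T, ((m + 1 : ℝ) / m) * (c i / B) := by
        apply Finset.sum_le_sum
        intro i hi
        exact stmt11_key B hB c hc m hm i (hT i hi)
    _ = ((m + 1 : ℝ) / m) * ((∑ i ∈ T, c i) / B) := by
        rw [← Finset.mul_sum, Finset.sum_div]

/-- for every feasible set `S` (total cost at most `B`), the relative cost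
`Σ_{i∈S} 1/⌊B/c_i⌋` is at most `1.7`. -/
theorem stmt11 {n : ℕ} (B : ℝ) (hB : 0 < B) (c : Fin n → ℝ) (hc : ∀ i, 0 < c i)
    (S : Finset (Fin n)) (hS : ∑ i ∈ S, c i ≤ B) :
    ∑ i ∈ S, ((⌊B / c i⌋₊ : ℝ))⁻¹ ≤ 1.7 := by
  have hfl1 : ∀ i ∈ S, 1 ≤ ⌊B / c i⌋₊ := by
    intro i hi
    have hci : c i ≤ B :=
      le_trans (Finset.single_le_sum (fun j _ => (hc j).le) hi) hS
    exact Nat.le_floor (by push_cast; rw [le_div_iff₀ (hc i)]; linarith)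
  by_cases hA : ∃ i ∈ S, ⌊B / c i⌋₊ = 1
  · -- there is a big item i₀ with c i₀ > B/2
    obtain ⟨i₀, hi₀S, hi₀⟩ := hA
    have hxi₀ : B / c i₀ < 2 := by
      have := Nat.lt_floor_add_one (B / c i₀)
      rw [hi₀] at this
      push_cast at this
      linarith
    have hci₀ : B / 2 < c i₀ := by
      rw [div_lt_iff₀ (hc i₀)] at hxi₀
      linarith
    have hsplit : c i₀ + ∑ i ∈ S.erase i₀, c i = ∑ i ∈ S, c i :=
      Finset.add_sum_erase S c hi₀S
    have hS' : ∑ i ∈ S.erase i₀, c i < B / 2 := by linarith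
    have hfl2 : ∀ i ∈ S.erase i₀, 2 ≤ ⌊B / c i⌋₊ := by
      intro i hi
      have hci : c i ≤ ∑ j ∈ S.erase i₀, c j :=
        Finset.single_le_sum (fun j _ => (hc j).le) hi
      have : c i < B / 2 := lt_of_le_of_lt hci hS'
      exact Nat.le_floor (by push_cast; rw [le_div_iff₀ (hc i)]; linarith)
    have hsum_split : ∑ i ∈ S, ((⌊B / c i⌋₊ : ℝ))⁻¹ =
        ((⌊B / c i₀⌋₊ : ℝ))⁻¹ + ∑ i ∈ S.erase i₀, ((⌊B / c i⌋₊ : ℝ))⁻¹ :=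
      (Finset.add_sum_erase S _ hi₀S).symm
    rw [hsum_split, hi₀]
    norm_num
    by_cases hB2 : ∃ j ∈ S.erase i₀, ⌊B / c j⌋₊ = 2
    · -- also a floor-2 item j with c j > B/3
      obtain ⟨j, hjS, hj⟩ := hB2
      have hxj : B / c j < 3 := by
        have := Nat.lt_floor_add_one (B / c j)
        rw [hj] at this
        push_cast at this
        linarith
      have hcj : B / 3 < c j := by
        rw [div_lt_iff₀ (hc j)] at hxj
        linarith
      have hsplit2 : c j + ∑ i ∈ (S.erase i₀).erase j, c i = ∑ i ∈ S.erase i₀, c i :=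
        Finset.add_sum_erase _ c hjS
      have hS'' : ∑ i ∈ (S.erase i₀).erase j, c i < B / 6 := by linarith
      have hS''0 : 0 ≤ ∑ i ∈ (S.erase i₀).erase j, c i :=
        Finset.sum_nonneg (fun i _ => (hc i).le)
      have hfl6 : ∀ i ∈ (S.erase i₀).erase j, 6 ≤ ⌊B / c i⌋₊ := by
        intro i hi
        have hci : c i ≤ ∑ k ∈ (S.erase i₀).erase j, c k :=
          Finset.single_le_sum (fun k _ => (hc k).le) hi
        have : c i < B / 6 := lt_of_le_of_lt hci hS''
        exact Nat.le_floor (by push_cast; rw [le_div_iff₀ (hc i)]; linarith)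
      have hsum_split2 : ∑ i ∈ S.erase i₀, ((⌊B / c i⌋₊ : ℝ))⁻¹ =
          ((⌊B / c j⌋₊ : ℝ))⁻¹ + ∑ i ∈ (S.erase i₀).erase j, ((⌊B / c i⌋₊ : ℝ))⁻¹ :=
        (Finset.add_sum_erase _ _ hjS).symm
      rw [hsum_split2, hj]
      have hbound := stmt11_sum B hB c hc 6 (by norm_num) ((S.erase i₀).erase j) hfl6
      have hfrac : (∑ i ∈ (S.erase i₀).erase j, c i) / B < 1 / 6 := by
        rw [div_lt_div_iff₀ hB (by norm_num)]
        linarith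
      push_cast at hbound
      norm_num at hbound ⊢
      nlinarith [hbound, hfrac]
    · -- all remaining items have floor ≥ 3
      have hfl3 : ∀ i ∈ S.erase i₀, 3 ≤ ⌊B / c i⌋₊ := by
        intro i hi
        have h2 := hfl2 i hi
        rcases lt_or_eq_of_le h2 with h | h
        · omega
        · exact absurd ⟨i, hi, h.symm⟩ hB2
      have hbound := stmt11_sum B hB c hc 3 (by norm_num) (S.erase i₀) hfl3
      have hfrac : (∑ i ∈ S.erase i₀, c i) / B < 1 / 2 := by
        rw [div_lt_div_iff₀ hB (by norm_num)]
        linarith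
      push_cast at hbound
      nlinarith [hbound, hfrac]
  · -- all floors ≥ 2
    have hfl2 : ∀ i ∈ S, 2 ≤ ⌊B / c i⌋₊ := by
      intro i hi
      have h1 := hfl1 i hi
      rcases lt_or_eq_of_le h1 with h | h
      · omega
      · exact absurd ⟨i, hi, h.symm⟩ hA
    have hbound := stmt11_sum B hB c hc 2 (by norm_num) S hfl2
    have hfrac : (∑ i ∈ S, c i) / B ≤ 1 := by
      rw [div_le_one hB]; exact hS
    push_cast at hbound
    norm_num
    nlinarith [hbound, hfrac]
end

section
/- Let B > 0, β ∈ (0,1), and let c_1, …, c_n be item costs with 0 < c_i ≤ βB for all i (β-small costs), and set k_i = ⌊B/c_i⌋ and d(S) = Σ_{i∈S} 1/k_i. If S ⊊ {1,…,n} satisfies Σ_{i∈S} c_i ≤ B and Σ_{i∈S} c_i + c_j > B for every j ∈ {1,…,n}∖S (i.e. S is a maximal feasible set), then 1 − β/(1−β) ≤ d(S) ≤ 1 + β/(1−β). -/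
open Finset

/-- relative cost bounds for a maximal feasible set under β-small costs:
`1 − β/(1−β) ≤ d(S) ≤ 1 + β/(1−β)`. -/
theorem stmt12 {n : ℕ} (B β : ℝ) (hB : 0 < B) (hβ0 : 0 < β) (hβ1 : β < 1)
    (c : Fin n → ℝ) (hc : ∀ i, 0 < c i) (hcsmall : ∀ i, c i ≤ β * B)
    (k : Fin n → ℕ) (hk : ∀ i, k i = ⌊B / c i⌋₊)
    (S : Finset (Fin n)) (hSproper : S ⊂ Finset.univ)
    (hfeas : ∑ i ∈ S, c i ≤ B)
    (hmax : ∀ j : Fin n, j ∉ S → B < (∑ i ∈ S, c i) + c j) :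
    1 - β / (1 - β) ≤ ∑ i ∈ S, ((k i : ℝ))⁻¹ ∧
      ∑ i ∈ S, ((k i : ℝ))⁻¹ ≤ 1 + β / (1 - β) := by
  have h1β : (0:ℝ) < 1 - β := by linarith
  have hkpos : ∀ i, 0 < (k i : ℝ) := by
    intro i
    have h1 : 1 ≤ k i := by
      rw [hk i]
      apply Nat.le_floor
      rw [Nat.cast_one, le_div_iff₀ (hc i)]
      have := hcsmall i
      nlinarith
    exact_mod_cast Nat.lt_of_lt_of_le Nat.zero_lt_one h1
  have hup : ∀ i, (k i : ℝ)⁻¹ ≤ c i / ((1 - β) * B) := by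
    intro i
    have hkf : B / c i < (k i : ℝ) + 1 := by
      rw [hk i]; exact Nat.lt_floor_add_one _
    have h1 : B - c i < c i * k i := by
      have := (div_lt_iff₀ (hc i)).mp hkf
      nlinarith [hc i]
    have h2 : (1 - β) * B ≤ c i * k i := by nlinarith [hcsmall i]
    rw [inv_eq_one_div, div_le_div_iff₀ (hkpos i) (by positivity)]
    nlinarith
  have hlo : ∀ i, c i / B ≤ (k i : ℝ)⁻¹ := by
    intro i
    have hkf : (k i : ℝ) ≤ B / c i := by
      rw [hk i]; exact Nat.floor_le (le_of_lt (div_pos hB (hc i)))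
    have h1 : c i * k i ≤ B := by
      have := (le_div_iff₀ (hc i)).mp hkf; nlinarith
    rw [inv_eq_one_div, div_le_div_iff₀ hB (hkpos i)]
    nlinarith
  obtain ⟨j, _, hjS⟩ := Finset.exists_of_ssubset hSproper
  have hsum_lo : (1 - β) * B < ∑ i ∈ S, c i := by
    have h1 := hmax j hjS
    have h2 := hcsmall j
    nlinarith
  constructor
  · calc 1 - β / (1 - β) ≤ 1 - β := by
          rw [sub_le_sub_iff_left, le_div_iff₀ h1β]; nlinarith
      _ ≤ ∑ i ∈ S, c i / B := by
          rw [← Finset.sum_div, le_div_iff₀ hB]; nlinarith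
      _ ≤ ∑ i ∈ S, (k i : ℝ)⁻¹ := Finset.sum_le_sum fun i _ => hlo i
  · calc ∑ i ∈ S, (k i : ℝ)⁻¹ ≤ ∑ i ∈ S, c i / ((1 - β) * B) :=
          Finset.sum_le_sum fun i _ => hup i
      _ = (∑ i ∈ S, c i) / ((1 - β) * B) := by rw [Finset.sum_div]
      _ ≤ B / ((1 - β) * B) := by gcongr
      _ = 1 + β / (1 - β) := by
          field_simp; ring
end

section
/- Let B > 0, β ∈ [0,1), and let c_1, …, c_n be item costs with 0 < c_i ≤ B for all i, with k_i = ⌊B/c_i⌋ and d(S) = Σ_{i∈S} 1/k_i. Suppose the costs are β-regular, i.e. k_i ≥ (1−β)·k_j for all i, j ∈ {1,…,n}. If S ⊊ {1,…,n} satisfies Σ_{i∈S} c_i ≤ B and Σ_{i∈S} c_i + c_j > B for every j ∈ {1,…,n}∖S (i.e. S is a maximal feasible set), then 1 − β/(1−β) ≤ d(S) ≤ 1 + β/(1−β). -/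
/-!
Averaging: if `S` fits in the budget, some `l ∈ S` has `c l ≤ B / |S|`, i.e. `|S| ≤ k l`; if
`S ∪ {j}` overflows it, some `l` there has `c l > B / (|S| + 1)`, i.e. `k l ≤ |S|`. Regularity
makes every `k i` within the factor `1 - β` of this `k l`, so `d(S) = ∑ 1 / k i` is comparable
with `|S| / k l`, which gives `d(S) ≤ 1 / (1 - β) = 1 + β / (1 - β)` and
`d(S) ≥ 1 - β ≥ 1 - β / (1 - β)`.
-/

open Finset

namespace Finset

variable {ι : Type*} {s : Finset ι} {c : ι → ℝ} {B : ℝ}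

theorem exists_card_le_floor_div_of_sum_le (hs : s.Nonempty) (hc : ∀ i ∈ s, 0 < c i)
    (hsum : ∑ i ∈ s, c i ≤ B) : ∃ i ∈ s, #s ≤ ⌊B / c i⌋₊ := by
  have hcard : (0 : ℝ) < #s := by exact_mod_cast hs.card_pos
  obtain ⟨i, hi, hle⟩ := exists_le_of_sum_le (f := c) (g := fun _ => B / #s) hs <| by
    rwa [sum_const, nsmul_eq_mul, mul_div_cancel₀ _ hcard.ne']
  refine ⟨i, hi, Nat.le_floor ?_⟩
  rw [le_div_iff₀ (hc i hi)]
  rwa [le_div_iff₀ hcard, mul_comm] at hle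

theorem exists_floor_div_lt_card_of_lt_sum (hc : ∀ i ∈ s, 0 < c i) (hB : 0 ≤ B)
    (hsum : B < ∑ i ∈ s, c i) : ∃ i ∈ s, ⌊B / c i⌋₊ < #s := by
  have hs : s.Nonempty := nonempty_of_sum_ne_zero (hB.trans_lt hsum).ne'
  have hcard : (0 : ℝ) < #s := by exact_mod_cast hs.card_pos
  obtain ⟨i, hi, hlt⟩ := exists_lt_of_sum_lt (s := s) (f := fun _ => B / #s) (g := c) <| by
    rwa [sum_const, nsmul_eq_mul, mul_div_cancel₀ _ hcard.ne']
  refine ⟨i, hi, (Nat.floor_lt (div_nonneg hB (hc i hi).le)).2 ?_⟩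
  rw [div_lt_iff₀ (hc i hi)]
  rwa [div_lt_iff₀ hcard, mul_comm] at hlt

variable {w : ι → ℝ} {m β : ℝ}

theorem sum_inv_le_one_div_one_sub (hβ : β < 1) (hm : 0 < m)
    (hw : ∀ i ∈ s, (1 - β) * m ≤ w i) (hcard : #s ≤ m) : ∑ i ∈ s, (w i)⁻¹ ≤ 1 / (1 - β) := by
  have hβm : 0 < (1 - β) * m := mul_pos (sub_pos.2 hβ) hm
  calc ∑ i ∈ s, (w i)⁻¹ ≤ #s • ((1 - β) * m)⁻¹ :=
        sum_le_card_nsmul _ _ _ fun i hi => inv_anti₀ hβm (hw i hi)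
    _ ≤ m * ((1 - β) * m)⁻¹ := by
        rw [nsmul_eq_mul]; exact mul_le_mul_of_nonneg_right hcard (inv_pos.2 hβm).le
    _ = 1 / (1 - β) := by field_simp

theorem one_sub_le_sum_inv (hβ : β ≤ 1) (hm : 0 < m) (hw₀ : ∀ i ∈ s, 0 < w i)
    (hw : ∀ i ∈ s, (1 - β) * w i ≤ m) (hcard : m ≤ #s) : 1 - β ≤ ∑ i ∈ s, (w i)⁻¹ := by
  have hterm : ∀ i ∈ s, (1 - β) / m ≤ (w i)⁻¹ := fun i hi => by
    rw [div_le_iff₀ hm, ← div_eq_inv_mul, le_div_iff₀ (hw₀ i hi)]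
    exact hw i hi
  calc 1 - β = m * ((1 - β) / m) := by field_simp
    _ ≤ #s * ((1 - β) / m) := mul_le_mul_of_nonneg_right hcard (div_nonneg (sub_nonneg.2 hβ) hm.le)
    _ = #s • ((1 - β) / m) := (nsmul_eq_mul _ _).symm
    _ ≤ ∑ i ∈ s, (w i)⁻¹ := card_nsmul_le_sum _ _ _ hterm

end Finset

/-- relative cost bounds for a maximal feasible set under β-regular costs:
`1 − β/(1−β) ≤ d(S) ≤ 1 + β/(1−β)`. -/
theorem stmt13 {n : ℕ} (B β : ℝ) (hB : 0 < B) (hβ0 : 0 ≤ β) (hβ1 : β < 1)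
    (c : Fin n → ℝ) (hc : ∀ i, 0 < c i) (hcB : ∀ i, c i ≤ B)
    (k : Fin n → ℕ) (hk : ∀ i, k i = ⌊B / c i⌋₊)
    (hreg : ∀ i j : Fin n, (1 - β) * (k j : ℝ) ≤ (k i : ℝ))
    (S : Finset (Fin n)) (hSproper : S ⊂ Finset.univ)
    (hfeas : ∑ i ∈ S, c i ≤ B)
    (hmax : ∀ j : Fin n, j ∉ S → B < (∑ i ∈ S, c i) + c j) :
    1 - β / (1 - β) ≤ ∑ i ∈ S, ((k i : ℝ))⁻¹ ∧
      ∑ i ∈ S, ((k i : ℝ))⁻¹ ≤ 1 + β / (1 - β) := by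
  have hkpos : ∀ i, (0 : ℝ) < k i := fun i => by
    have : 1 ≤ k i := hk i ▸ (Nat.one_le_floor_iff _).2 ((one_le_div (hc i)).2 (hcB i))
    exact_mod_cast this
  have hβ_le : β ≤ β / (1 - β) := le_div_self hβ0 (sub_pos.2 hβ1) (by linarith)
  obtain ⟨j, -, hj⟩ := exists_of_ssubset hSproper
  constructor
  · obtain ⟨l, -, hl⟩ := exists_floor_div_lt_card_of_lt_sum (s := insert j S) (fun i _ => hc i)
      hB.le (by rw [sum_insert hj, add_comm]; exact hmax j hj)
    rw [card_insert_of_notMem hj, ← hk, Nat.lt_succ_iff] at hl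
    have := one_sub_le_sum_inv hβ1.le (hkpos l) (fun i _ => hkpos i) (fun i _ => hreg l i)
      (by exact_mod_cast hl)
    linarith
  · rcases S.eq_empty_or_nonempty with rfl | hS
    · rw [sum_empty]; positivity
    obtain ⟨l, -, hl⟩ := exists_card_le_floor_div_of_sum_le hS (fun i _ => hc i) hfeas
    rw [← hk] at hl
    calc ∑ i ∈ S, ((k i : ℝ))⁻¹ ≤ 1 / (1 - β) :=
          sum_inv_le_one_div_one_sub hβ1 (hkpos l) (fun i _ => hreg i l) (by exact_mod_cast hl)
      _ = 1 + β / (1 - β) := by field_simp [(sub_pos.2 hβ1).ne']; ring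
end

section
/- Suppose the value function g satisfies the diminishing returns property and has curvature at most α for some α ∈ [0,1). Then for every nonempty S ⊆ {1,…,n}, u(S) ≤ (d(S)/(1−α))·v(S), where v(S) = (Σ_{i∈S} r_i/k_i) / (Σ_{i∈S} 1/k_i) is the average score of S. -/
/-!
Diminishing returns with `g ∅ = 0` makes `g` subadditive, `g(s) ≤ ∑_{z ∈ s} g{z}`, so
`u(S) ≤ ∑_{i ∈ S} E g{X_i}`. Curvature at most `α` gives the reverse inequality up to the
factor `1 - α`, `(1 - α) ∑_{z ∈ s} g{z} ≤ g(s)`; applied to `k_i` i.i.d. copies of `X_i` it yields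
`(1 - α) k_i E g{X_i} ≤ r_i`. Hence `u(S) ≤ ∑_{i ∈ S} r_i / ((1 - α) k_i)`, which is the claimed
bound once the average score is multiplied out.
-/

open MeasureTheory ProbabilityTheory Finset

theorem DiminishingReturns.le_sum_map_singleton {g : Multiset NNReal → ℝ}
    (hdr : DiminishingReturns g) (hg0 : g 0 = 0) (s : Multiset NNReal) :
    g s ≤ (s.map fun z => g {z}).sum := by
  induction s using Multiset.induction_on with
  | empty => simp [hg0]
  | cons z s ih =>
    have h := hdr (Multiset.zero_le s) z
    simp only [Multiset.cons_zero, hg0, sub_zero] at h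
    rw [Multiset.map_cons, Multiset.sum_cons]
    linarith

theorem CurvatureLE.mul_sum_map_singleton_le {g : Multiset NNReal → ℝ} {α : ℝ}
    (hcurv : CurvatureLE g α) (hg0 : g 0 = 0) (s : Multiset NNReal) :
    (1 - α) * (s.map fun z => g {z}).sum ≤ g s := by
  induction s using Multiset.induction_on with
  | empty => simp [hg0]
  | cons z s ih =>
    have h := hcurv (Multiset.zero_le s) z
    simp only [Multiset.cons_zero, hg0, sub_zero] at h
    rw [Multiset.map_cons, Multiset.sum_cons, mul_add]
    linarith

theorem utility_le_sum_integral_singleton {Ω : Type} [MeasurableSpace Ω] {μ : Measure Ω}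
    {n : ℕ} {g : Multiset NNReal → ℝ} (hdr : DiminishingReturns g) (hg0 : g 0 = 0)
    {X : Fin n → Ω → NNReal} {S : Finset (Fin n)}
    (hIntS : Integrable (fun ω => g (Multiset.map (fun i => X i ω) S.val)) μ)
    (hInt1 : ∀ i ∈ S, Integrable (fun ω => g {X i ω}) μ) :
    utility μ g X S ≤ ∑ i ∈ S, ∫ ω, g {X i ω} ∂μ := by
  rw [← integral_finsetSum S hInt1]
  refine integral_mono hIntS (integrable_finsetSum S hInt1) fun ω => ?_
  simpa [Multiset.map_map, Function.comp_def] using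
    hdr.le_sum_map_singleton hg0 (S.val.map fun i => X i ω)

theorem CurvatureLE.mul_integral_singleton_le_integral_pi {Ω : Type*} [MeasurableSpace Ω]
    {μ : Measure Ω} [IsProbabilityMeasure μ] {g : Multiset NNReal → ℝ} {α : ℝ}
    (hcurv : CurvatureLE g α) (hg0 : g 0 = 0) {Y : Ω → NNReal} (m : ℕ)
    (hInt1 : Integrable (fun ω => g {Y ω}) μ)
    (hIntm : Integrable (fun ω : Fin m → Ω => g (List.ofFn fun j => Y (ω j)))
      (Measure.pi fun _ => μ)) :
    (1 - α) * (m * ∫ ω, g {Y ω} ∂μ) ≤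
      ∫ ω : Fin m → Ω, g (List.ofFn fun j => Y (ω j)) ∂(Measure.pi fun _ => μ) := by
  have hIntj (j : Fin m) :
      Integrable (fun ω : Fin m → Ω => g {Y (ω j)}) (Measure.pi fun _ => μ) :=
    integrable_comp_eval (μ := fun _ => μ) hInt1
  have hpointwise (ω : Fin m → Ω) :
      (1 - α) * ∑ j, g {Y (ω j)} ≤ g (List.ofFn fun j => Y (ω j)) := by
    simpa [List.map_ofFn, List.sum_ofFn, Function.comp_def] using
      hcurv.mul_sum_map_singleton_le hg0 (List.ofFn fun j => Y (ω j))
  calc (1 - α) * (m * ∫ ω, g {Y ω} ∂μ)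
      = (1 - α) * ∫ ω : Fin m → Ω, ∑ j, g {Y (ω j)} ∂(Measure.pi fun _ => μ) := by
        rw [integral_finsetSum _ fun j _ => hIntj j]
        simp [integral_comp_eval (μ := fun _ => μ) hInt1.aestronglyMeasurable]
    _ ≤ _ := by
        rw [← integral_const_mul]
        exact integral_mono ((integrable_finsetSum _ fun j _ => hIntj j).const_mul _) hIntm
          hpointwise

theorem CurvatureLE.mul_integral_singleton_le_testScore {Ω : Type} [MeasurableSpace Ω]
    {μ : Measure Ω} [IsProbabilityMeasure μ] {n : ℕ} {g : Multiset NNReal → ℝ} {α : ℝ}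
    (hcurv : CurvatureLE g α) (hg0 : g 0 = 0) {P : Fin n → Measure NNReal}
    [∀ i, IsProbabilityMeasure (P i)] (k : Fin n → ℕ) {X : Fin n → Ω → NNReal} {i : Fin n}
    (hX : Measurable (X i)) (hlaw : μ.map (X i) = P i)
    (hInt1 : Integrable (fun ω => g {X i ω}) μ)
    (hIntr : Integrable (fun x : Fin (k i) → NNReal => g (List.ofFn x))
      (Measure.pi fun _ => P i)) :
    (1 - α) * (k i * ∫ ω, g {X i ω} ∂μ) ≤ testScore g P k i := by
  -- `g` need not be measurable, so the score is pulled back to `k i` copies of `Ω` rather than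
  -- pushing the integrability of `ω ↦ g {X i ω}` forward to `P i`.
  have hcopies : MeasurePreserving (fun (ω : Fin (k i) → Ω) (j : Fin (k i)) => X i (ω j))
      (Measure.pi fun _ => μ) (Measure.pi fun _ => P i) :=
    measurePreserving_pi _ _ fun _ => ⟨hX, hlaw⟩
  rw [testScore, ← hcopies.map_eq, integral_map hcopies.measurable.aemeasurable
    (by rw [hcopies.map_eq]; exact hIntr.aestronglyMeasurable)]
  exact hcurv.mul_integral_singleton_le_integral_pi hg0 (k i) hInt1
    ((hcopies.integrable_comp hIntr.aestronglyMeasurable).2 hIntr)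

theorem stmt14_general {Ω : Type} [MeasurableSpace Ω] (μ : Measure Ω) [IsProbabilityMeasure μ]
    {n : ℕ} (c : Fin n → ℝ) (B : ℝ) (hc : ∀ i, 0 < c i) (hcB : ∀ i, c i ≤ B)
    (k : Fin n → ℕ) (hk : ∀ i, k i = ⌊B / c i⌋₊)
    (X : Fin n → Ω → NNReal) (hXmeas : ∀ i, Measurable (X i))
    (P : Fin n → Measure NNReal) [∀ i, IsProbabilityMeasure (P i)]
    (hlaw : ∀ i, μ.map (X i) = P i)
    (g : Multiset NNReal → ℝ) (hg0 : g 0 = 0)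
    (hdr : DiminishingReturns g)
    (α : ℝ) (hα1 : α < 1) (hcurv : CurvatureLE g α)
    (hIntu : ∀ S : Finset (Fin n),
      Integrable (fun ω => g (Multiset.map (fun i => X i ω) S.val)) μ)
    (hIntr : ∀ i, Integrable (fun x : Fin (k i) → NNReal => g (List.ofFn x))
      (Measure.pi fun _ => P i))
    (S : Finset (Fin n)) (hS : S.Nonempty) :
    utility μ g X S ≤
      (relCost k S / (1 - α)) *
        ((∑ i ∈ S, testScore g P k i / (k i : ℝ)) / ∑ i ∈ S, ((k i : ℝ))⁻¹) := by
  have hα : 0 < 1 - α := by linarith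
  have hkpos (i : Fin n) : (0 : ℝ) < k i := by
    rw [hk i, Nat.cast_pos, Nat.floor_pos]
    exact (one_le_div (hc i)).2 (hcB i)
  have hInt1 (i : Fin n) : Integrable (fun ω => g {X i ω}) μ := by simpa using hIntu {i}
  have hsingle (i : Fin n) : ∫ ω, g {X i ω} ∂μ ≤ testScore g P k i / k i / (1 - α) := by
    rw [div_div, le_div_iff₀ (mul_pos (hkpos i) hα)]
    linarith [hcurv.mul_integral_singleton_le_testScore hg0 k (hXmeas i) (hlaw i) (hInt1 i)
      (hIntr i)]
  have hcost : relCost k S ≠ 0 := (sum_pos (fun i _ => inv_pos.2 (hkpos i)) hS).ne'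
  calc utility μ g X S ≤ ∑ i ∈ S, ∫ ω, g {X i ω} ∂μ :=
        utility_le_sum_integral_singleton hdr hg0 (hIntu S) fun i _ => hInt1 i
    _ ≤ ∑ i ∈ S, testScore g P k i / k i / (1 - α) := sum_le_sum fun i _ => hsingle i
    _ = _ := by
        rw [← sum_div, ← relCost]
        field_simp

/-- upper bound on the utility via the average score and curvature:
`u(S) ≤ (d(S)/(1−α)) · v(S)`. -/
theorem stmt14 {Ω : Type} [MeasurableSpace Ω] (μ : Measure Ω) [IsProbabilityMeasure μ]
    {n : ℕ} (hn : 1 ≤ n)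
    (c : Fin n → ℝ) (B : ℝ) (hB : 0 < B) (hc : ∀ i, 0 < c i) (hcB : ∀ i, c i ≤ B)
    (k : Fin n → ℕ) (hk : ∀ i, k i = ⌊B / c i⌋₊)
    (X : Fin n → Ω → NNReal) (hXmeas : ∀ i, Measurable (X i))
    (P : Fin n → Measure NNReal) [∀ i, IsProbabilityMeasure (P i)]
    (hlaw : ∀ i, μ.map (X i) = P i)
    (hindep : iIndepFun X μ)
    (g : Multiset NNReal → ℝ) (hg0 : g 0 = 0) (hgnn : ∀ s, 0 ≤ g s)
    (hdr : DiminishingReturns g)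
    (α : ℝ) (hα0 : 0 ≤ α) (hα1 : α < 1) (hcurv : CurvatureLE g α)
    (hIntu : ∀ S : Finset (Fin n),
      Integrable (fun ω => g (Multiset.map (fun i => X i ω) S.val)) μ)
    (hIntr : ∀ i, Integrable (fun x : Fin (k i) → NNReal => g (List.ofFn x))
      (Measure.pi fun _ => P i))
    (S : Finset (Fin n)) (hS : S.Nonempty) :
    utility μ g X S ≤
      (relCost k S / (1 - α)) *
        ((∑ i ∈ S, testScore g P k i / (k i : ℝ)) / ∑ i ∈ S, ((k i : ℝ))⁻¹) :=
  stmt14_general μ c B hc hcB k hk X hXmeas P hlaw g hg0 hdr α hα1 hcurv hIntu hIntr S hS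
end

section
/- Let ℓ ≥ 1, α ∈ (0,1], let k_1, …, k_ℓ be positive integers, and let 0 ≤ r_1 ≤ r_2 ≤ … ≤ r_ℓ be reals. Then Σ_{j=1}^{ℓ} (r_j/k_j)·∏_{t=j+1}^{ℓ} (1 − α/k_t) ≥ (1/α)·(1 − ∏_{j=1}^{ℓ} (1 − α/k_j))·(Σ_{j=1}^{ℓ} r_j/k_j) / (Σ_{j=1}^{ℓ} 1/k_j). -/
/-!
Write `w j = 1 / k j` and `P j = ∏_{t > j} (1 - α w_t)`. Telescoping the product gives
`1 - ∏_j (1 - α w_j) = α ∑_j w_j P_j`, so the claim becomes the weighted Chebyshev inequality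
`(∑ w r) (∑ w P) ≤ (∑ w) (∑ w r P)`, which holds because `r` and `P` are both monotone:
`P` is a suffix product of factors in `[0, 1]`.
-/

open Finset

theorem MonovaryOn.sum_mul_sum_le_sum_mul_sum_of_nonneg {ι R : Type*} [CommRing R]
    [LinearOrder R] [IsStrictOrderedRing R] {s : Finset ι} {w f g : ι → R}
    (hw : ∀ i ∈ s, 0 ≤ w i) (hfg : MonovaryOn f g s) :
    (∑ i ∈ s, w i * f i) * (∑ i ∈ s, w i * g i) ≤
      (∑ i ∈ s, w i) * ∑ i ∈ s, w i * (f i * g i) := by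
  have hpairs : 0 ≤ ∑ i ∈ s, ∑ j ∈ s, w i * w j * ((f j - f i) * (g j - g i)) :=
    sum_nonneg fun i hi ↦ sum_nonneg fun j hj ↦
      mul_nonneg (mul_nonneg (hw i hi) (hw j hj)) (hfg.sub_mul_sub_nonneg hi hj)
  have hterm : ∀ i j, w i * w j * ((f j - f i) * (g j - g i)) = w i * (w j * (f j * g j)) +
      w j * (w i * (f i * g i)) - w i * g i * (w j * f j) - w i * f i * (w j * g j) := by
    intros; ring
  simp only [hterm, sum_add_distrib, sum_sub_distrib, ← mul_sum, ← sum_mul] at hpairs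
  linarith

theorem Finset.one_sub_prod_one_sub_eq_sum_mul_prod_Ioi {ι R : Type*} [CommRing R]
    [LinearOrder ι] [Fintype ι] [LocallyFiniteOrderTop ι] (f : ι → R) :
    1 - ∏ i, (1 - f i) = ∑ i, f i * ∏ j ∈ Ioi i, (1 - f j) := by
  have h : ∏ i : ιᵒᵈ, (1 - f i.ofDual) =
      1 - ∑ i : ιᵒᵈ, f i.ofDual * ∏ j with j < i, (1 - f j.ofDual) :=
    prod_one_sub_ordered univ _
  rw [show ∏ i, (1 - f i) = ∏ i : ιᵒᵈ, (1 - f i.ofDual) from rfl, h, sub_sub_cancel]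
  refine Fintype.sum_equiv OrderDual.ofDual _ _ fun i ↦ ?_
  rw [← filter_lt_eq_Ioi]
  rfl

theorem Finset.monotone_prod_Ioi {ι R : Type*} [Preorder ι] [LocallyFiniteOrderTop ι]
    [CommSemiring R] [PartialOrder R] [IsOrderedRing R] {f : ι → R}
    (hf0 : ∀ i, 0 ≤ f i) (hf1 : ∀ i, f i ≤ 1) :
    Monotone fun i ↦ ∏ j ∈ Ioi i, f j := fun _ _ hij ↦
  prod_le_prod_of_subset_of_le_one (Ioi_subset_Ioi hij) (fun j _ ↦ hf0 j) fun j _ _ ↦ hf1 j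

theorem stmt17_general {ℓ : ℕ} (hℓ : 1 ≤ ℓ) (α : ℝ) (hα0 : 0 < α) (hα1 : α ≤ 1)
    (k : Fin ℓ → ℕ) (hk : ∀ j, 1 ≤ k j)
    (r : Fin ℓ → ℝ) (hrmono : Monotone r) :
    (1 / α) * (1 - ∏ j : Fin ℓ, (1 - α / (k j : ℝ))) *
        ((∑ j : Fin ℓ, r j / (k j : ℝ)) / ∑ j : Fin ℓ, ((k j : ℝ))⁻¹) ≤
      ∑ j : Fin ℓ, (r j / (k j : ℝ)) * ∏ t ∈ Finset.Ioi j, (1 - α / (k t : ℝ)) := by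
  set w : Fin ℓ → ℝ := fun j ↦ (k j : ℝ)⁻¹
  set P : Fin ℓ → ℝ := fun j ↦ ∏ t ∈ Ioi j, (1 - α / (k t : ℝ))
  have hk1 (j : Fin ℓ) : (1 : ℝ) ≤ k j := by exact_mod_cast hk j
  have hk0 (j : Fin ℓ) : (0 : ℝ) < k j := zero_lt_one.trans_le (hk1 j)
  have hPmono : Monotone P := monotone_prod_Ioi
    (fun j ↦ sub_nonneg.mpr ((div_le_one₀ (hk0 j)).mpr (hα1.trans (hk1 j))))
    (fun j ↦ sub_le_self _ (div_nonneg hα0.le (hk0 j).le))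
  have htelescope : 1 - ∏ j, (1 - α / (k j : ℝ)) = α * ∑ j, w j * P j := by
    rw [one_sub_prod_one_sub_eq_sum_mul_prod_Ioi, mul_sum]
    exact sum_congr rfl fun j _ ↦ by rw [div_eq_mul_inv, mul_assoc]
  have hchebyshev := ((hrmono.monovary hPmono).monovaryOn _)
    |>.sum_mul_sum_le_sum_mul_sum_of_nonneg (s := univ) fun j _ ↦ (inv_pos.mpr (hk0 j)).le
  have hsum_w : 0 < ∑ j, w j :=
    sum_pos (fun j _ ↦ inv_pos.mpr (hk0 j)) (univ_nonempty_iff.mpr ⟨⟨0, hℓ⟩⟩)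
  calc (1 / α) * (1 - ∏ j, (1 - α / (k j : ℝ))) * ((∑ j, r j / (k j : ℝ)) / ∑ j, w j)
      = (∑ j, w j * r j) * (∑ j, w j * P j) / ∑ j, w j := by
        rw [htelescope, one_div, inv_mul_cancel_left₀ hα0.ne', mul_div_assoc', mul_comm]
        exact congrArg (· * _ / _) (sum_congr rfl fun j _ ↦ div_eq_inv_mul (r j) _)
    _ ≤ ∑ j, w j * (r j * P j) := by rwa [div_le_iff₀' hsum_w]
    _ = ∑ j, (r j / (k j : ℝ)) * P j :=
        sum_congr rfl fun j _ ↦ by rw [div_eq_inv_mul, mul_assoc]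

/-- the key algebraic inequality in the curvature-based lower bound:
`Σ_j (r_j/k_j)·Π_{t>j}(1 − α/k_t) ≥ (1/α)·(1 − Π_j (1 − α/k_j))·(Σ_j r_j/k_j)/(Σ_j 1/k_j)`. -/
theorem stmt17 {ℓ : ℕ} (hℓ : 1 ≤ ℓ) (α : ℝ) (hα0 : 0 < α) (hα1 : α ≤ 1)
    (k : Fin ℓ → ℕ) (hk : ∀ j, 1 ≤ k j)
    (r : Fin ℓ → ℝ) (hr0 : ∀ j, 0 ≤ r j) (hrmono : Monotone r) :
    (1 / α) * (1 - ∏ j : Fin ℓ, (1 - α / (k j : ℝ))) *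
        ((∑ j : Fin ℓ, r j / (k j : ℝ)) / ∑ j : Fin ℓ, ((k j : ℝ))⁻¹) ≤
      ∑ j : Fin ℓ, (r j / (k j : ℝ)) * ∏ t ∈ Finset.Ioi j, (1 - α / (k t : ℝ)) :=
  stmt17_general hℓ α hα0 hα1 k hk r hrmono
end

section
/- Let ℓ ≥ 1, α ∈ (0,1], let k_1, …, k_ℓ be positive integers, let 0 ≤ r_1 ≤ r_2 ≤ … ≤ r_ℓ be reals, and let x_1, …, x_ℓ be reals satisfying α·(x_1 + … + x_{j−1}) + k_j·x_j ≥ r_j for every j ∈ {1,…,ℓ}. Then x_1 + … + x_ℓ ≥ (1/α)·(1 − ∏_{j=1}^{ℓ} (1 − α/k_j))·(Σ_{j=1}^{ℓ} r_j/k_j) / (Σ_{j=1}^{ℓ} 1/k_j), and consequently x_1 + … + x_ℓ ≥ ((1 − e^{−α·Σ_{j=1}^{ℓ} 1/k_j})/α)·(Σ_{j=1}^{ℓ} r_j/k_j) / (Σ_{j=1}^{ℓ} 1/k_j). -/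
open Finset

lemma aux_telescope (c : ℕ → ℝ) : ∀ n : ℕ,
    1 - ∏ i ∈ range n, c i = ∑ j ∈ range n, (1 - c j) * ∏ i ∈ Ico (j+1) n, c i := by
  intro n
  induction n with
  | zero => simp
  | succ n ih =>
    rw [prod_range_succ, sum_range_succ]
    have h1 : ∀ j ∈ range n, (1 - c j) * ∏ i ∈ Ico (j+1) (n+1), c i
        = ((1 - c j) * ∏ i ∈ Ico (j+1) n, c i) * c n := by
      intro j hj
      rw [prod_Ico_succ_top (by have := mem_range.mp hj; omega : j+1 ≤ n), mul_assoc]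
    rw [sum_congr rfl h1, ← sum_mul, ← ih, Ico_self, prod_empty]
    ring

lemma aux_chebyshev (s : Finset ℕ) (w f g : ℕ → ℝ) (hw : ∀ i ∈ s, 0 ≤ w i)
    (hfg : ∀ i ∈ s, ∀ j ∈ s, 0 ≤ (f i - f j) * (g i - g j)) :
    (∑ i ∈ s, w i * f i) * (∑ i ∈ s, w i * g i) ≤
      (∑ i ∈ s, w i) * (∑ i ∈ s, w i * (f i * g i)) := by
  have key : 0 ≤ ∑ i ∈ s, ∑ j ∈ s, w i * w j * ((f i - f j) * (g i - g j)) :=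
    sum_nonneg fun i hi => sum_nonneg fun j hj =>
      mul_nonneg (mul_nonneg (hw i hi) (hw j hj)) (hfg i hi j hj)
  have expand : ∑ i ∈ s, ∑ j ∈ s, w i * w j * ((f i - f j) * (g i - g j))
      = 2 * ((∑ i ∈ s, w i) * (∑ i ∈ s, w i * (f i * g i))
        - (∑ i ∈ s, w i * f i) * (∑ i ∈ s, w i * g i)) := by
    have h1 : ∀ i ∈ s, ∑ j ∈ s, w i * w j * ((f i - f j) * (g i - g j))
        = (w i * (f i * g i)) * (∑ j ∈ s, w j) - (w i * f i) * (∑ j ∈ s, w j * g j)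
          - (w i * g i) * (∑ j ∈ s, w j * f j) + w i * (∑ j ∈ s, w j * (f j * g j)) := by
      intro i hi
      rw [show (∑ j ∈ s, w i * w j * ((f i - f j) * (g i - g j)))
          = ∑ j ∈ s, ((w i * (f i * g i)) * w j - (w i * f i) * (w j * g j)
            - (w i * g i) * (w j * f j) + w i * (w j * (f j * g j)))
          from sum_congr rfl fun j _ => by ring,
        sum_add_distrib, sum_sub_distrib, sum_sub_distrib,
        ← mul_sum, ← mul_sum, ← mul_sum, ← mul_sum]
    rw [sum_congr rfl h1, sum_add_distrib, sum_sub_distrib, sum_sub_distrib,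
      ← sum_mul, ← sum_mul, ← sum_mul, ← sum_mul]
    ring
  linarith [expand ▸ key]

lemma aux_induct (ℓ : ℕ) (α : ℝ) (hα1 : α ≤ 1)
    (K : ℕ → ℕ) (hK : ∀ i, 1 ≤ K i) (R X : ℕ → ℝ)
    (hx : ∀ j < ℓ, R j ≤ α * (∑ i ∈ range j, X i) + (K j : ℝ) * X j) :
    ∀ n ≤ ℓ, ∑ j ∈ range n, (R j / (K j : ℝ)) * ∏ i ∈ Ico (j+1) n, (1 - α / (K i : ℝ))
      ≤ ∑ i ∈ range n, X i := by
  have hKpos : ∀ i, (0:ℝ) < (K i : ℝ) := fun i => by exact_mod_cast (hK i)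
  have hc0 : ∀ i, 0 ≤ 1 - α / (K i : ℝ) := by
    intro i
    have : α / (K i : ℝ) ≤ 1 := by
      rw [div_le_one (hKpos i)]
      calc α ≤ 1 := hα1
        _ ≤ (K i : ℝ) := by exact_mod_cast hK i
    linarith
  intro n
  induction n with
  | zero => simp
  | succ n ih =>
    intro hn1
    have hn : n < ℓ := hn1
    have hle : n ≤ ℓ := le_of_lt hn
    rw [sum_range_succ (f := X)]
    set c : ℕ → ℝ := fun i => 1 - α / (K i : ℝ) with hc
    have h1 : ∀ j ∈ range n, (R j / (K j : ℝ)) * ∏ i ∈ Ico (j+1) (n+1), c i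
        = ((R j / (K j : ℝ)) * ∏ i ∈ Ico (j+1) n, c i) * c n := by
      intro j hj
      rw [prod_Ico_succ_top (by have := mem_range.mp hj; omega : j+1 ≤ n), mul_assoc]
    rw [sum_range_succ, sum_congr rfl h1, ← sum_mul, Ico_self, prod_empty, mul_one]
    have hXn : R n / (K n : ℝ) - (α / (K n : ℝ)) * (∑ i ∈ range n, X i) ≤ X n := by
      have h2 : R n / (K n : ℝ) - (α / (K n : ℝ)) * (∑ i ∈ range n, X i)
          = (R n - α * (∑ i ∈ range n, X i)) / (K n : ℝ) := by ring
      rw [h2, div_le_iff₀ (hKpos n)]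
      nlinarith [hx n hn]
    have hT := ih hle
    have hcn : 0 ≤ c n := hc0 n
    calc (∑ j ∈ range n, (R j / (K j : ℝ)) * ∏ i ∈ Ico (j+1) n, c i) * c n + R n / (K n : ℝ)
        ≤ (∑ i ∈ range n, X i) * c n + R n / (K n : ℝ) := by
          have := mul_le_mul_of_nonneg_right hT hcn
          linarith
      _ ≤ ∑ i ∈ range n, X i + X n := by
          have h3 : (∑ i ∈ range n, X i) * c n + R n / (K n : ℝ)
              = (∑ i ∈ range n, X i) + (R n / (K n : ℝ) - (α / (K n : ℝ)) * (∑ i ∈ range n, X i)) := by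
            simp only [hc]; ring
          rw [h3]
          linarith [hXn]

lemma aux_assembled (ℓ : ℕ) (hℓ : 1 ≤ ℓ) (α : ℝ) (hα0 : 0 < α) (hα1 : α ≤ 1)
    (K : ℕ → ℕ) (hK : ∀ i, 1 ≤ K i) (R X : ℕ → ℝ)
    (hR0 : ∀ j, 0 ≤ R j)
    (hRmono : ∀ i j, i ≤ j → j < ℓ → R i ≤ R j)
    (hx : ∀ j < ℓ, R j ≤ α * (∑ i ∈ range j, X i) + (K j : ℝ) * X j) :
    (1 / α) * (1 - ∏ j ∈ range ℓ, (1 - α / (K j : ℝ))) *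
        ((∑ j ∈ range ℓ, R j / (K j : ℝ)) / ∑ j ∈ range ℓ, ((K j : ℝ))⁻¹) ≤ ∑ j ∈ range ℓ, X j
    ∧
    ((1 - Real.exp (-(α * ∑ j ∈ range ℓ, ((K j : ℝ))⁻¹))) / α) *
        ((∑ j ∈ range ℓ, R j / (K j : ℝ)) / ∑ j ∈ range ℓ, ((K j : ℝ))⁻¹) ≤ ∑ j ∈ range ℓ, X j := by
  have hKpos : ∀ i, (0:ℝ) < (K i : ℝ) := fun i => by exact_mod_cast (hK i)
  set c : ℕ → ℝ := fun i => 1 - α / (K i : ℝ) with hcdef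
  have hc0 : ∀ i, 0 ≤ c i := by
    intro i
    have : α / (K i : ℝ) ≤ 1 := by
      rw [div_le_one (hKpos i)]
      calc α ≤ 1 := hα1
        _ ≤ (K i : ℝ) := by exact_mod_cast hK i
    simp only [hcdef]; linarith
  have hc1 : ∀ i, c i ≤ 1 := by
    intro i
    have : 0 ≤ α / (K i : ℝ) := div_nonneg hα0.le (hKpos i).le
    simp only [hcdef]; linarith
  set Q : ℕ → ℝ := fun j => ∏ i ∈ Ico (j+1) ℓ, c i with hQdef
  have hQ0 : ∀ j, 0 ≤ Q j := fun j => prod_nonneg fun i _ => hc0 i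
  have hQmono : ∀ i j, i ≤ j → j < ℓ → Q i ≤ Q j := by
    intro i j hij hj
    have hsplit := prod_Ico_consecutive c (by omega : i+1 ≤ j+1) (by omega : j+1 ≤ ℓ)
    have h1 : ∏ i ∈ Ico (i+1) (j+1), c i ≤ 1 := prod_le_one (fun i _ => hc0 i) (fun i _ => hc1 i)
    calc Q i = (∏ x ∈ Ico (i+1) (j+1), c x) * Q j := by rw [hQdef]; exact hsplit.symm
      _ ≤ 1 * Q j := mul_le_mul_of_nonneg_right h1 (hQ0 j)
      _ = Q j := one_mul _
  -- main induction
  have hmain : ∑ j ∈ range ℓ, (R j / (K j : ℝ)) * Q j ≤ ∑ i ∈ range ℓ, X i :=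
    aux_induct ℓ α hα1 K hK R X hx ℓ le_rfl
  set B : ℝ := ∑ j ∈ range ℓ, ((K j : ℝ))⁻¹ with hBdef
  set A : ℝ := ∑ j ∈ range ℓ, R j / (K j : ℝ) with hAdef
  set E : ℝ := ∑ j ∈ range ℓ, ((K j : ℝ))⁻¹ * Q j with hEdef
  set T : ℝ := ∑ i ∈ range ℓ, X i with hTdef
  have hB : 0 < B := by
    rw [hBdef]
    apply sum_pos (fun i _ => inv_pos.mpr (hKpos i))
    exact nonempty_range_iff.mpr (by omega)
  have hA : 0 ≤ A := sum_nonneg fun j _ => div_nonneg (hR0 j) (hKpos j).le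
  -- chebyshev
  have hcheb : A * E ≤ B * (∑ j ∈ range ℓ, (R j / (K j : ℝ)) * Q j) := by
    have h := aux_chebyshev (range ℓ) (fun j => ((K j : ℝ))⁻¹) R Q
      (fun i _ => (inv_pos.mpr (hKpos i)).le)
      (by
        intro i hi j hj
        rcases le_total i j with h | h
        · nlinarith [hRmono i j h (mem_range.mp hj), hQmono i j h (mem_range.mp hj)]
        · nlinarith [hRmono j i h (mem_range.mp hi), hQmono j i h (mem_range.mp hi)])
    have e1 : ∑ i ∈ range ℓ, ((K i : ℝ))⁻¹ * R i = A :=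
      sum_congr rfl fun j _ => by rw [div_eq_mul_inv, mul_comm]
    have e2 : ∑ i ∈ range ℓ, ((K i : ℝ))⁻¹ * (R i * Q i)
        = ∑ j ∈ range ℓ, (R j / (K j : ℝ)) * Q j :=
      sum_congr rfl fun j _ => by rw [div_eq_mul_inv]; ring
    rw [e1, e2] at h
    exact h
  have hEAT : E * (A / B) ≤ T := by
    rw [mul_div_assoc', div_le_iff₀ hB]
    calc E * A = A * E := mul_comm _ _
      _ ≤ B * (∑ j ∈ range ℓ, (R j / (K j : ℝ)) * Q j) := hcheb
      _ ≤ B * T := mul_le_mul_of_nonneg_left hmain hB.le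
      _ = T * B := mul_comm _ _
  -- telescope
  have htel : 1 - ∏ j ∈ range ℓ, c j = α * E := by
    rw [aux_telescope c ℓ, hEdef, mul_sum]
    refine sum_congr rfl fun j _ => ?_
    simp only [hcdef, hQdef]
    rw [div_eq_mul_inv]
    ring
  have part1 : (1 / α) * (1 - ∏ j ∈ range ℓ, c j) * (A / B) ≤ T := by
    rw [htel]
    have : (1 / α) * (α * E) = E := by field_simp
    rw [this]
    exact hEAT
  refine ⟨part1, ?_⟩
  -- exp bound
  have hexp : ∏ j ∈ range ℓ, c j ≤ Real.exp (-(α * B)) := by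
    calc ∏ j ∈ range ℓ, c j ≤ ∏ j ∈ range ℓ, Real.exp (-(α * ((K j : ℝ))⁻¹)) := by
          refine prod_le_prod (fun i _ => hc0 i) (fun i _ => ?_)
          have h := Real.add_one_le_exp (-(α * ((K i : ℝ))⁻¹))
          have : c i = -(α * ((K i : ℝ))⁻¹) + 1 := by
            simp only [hcdef]; rw [div_eq_mul_inv]; ring
          linarith [this ▸ h]
      _ = Real.exp (∑ j ∈ range ℓ, -(α * ((K j : ℝ))⁻¹)) := (Real.exp_sum _ _).symm
      _ = Real.exp (-(α * B)) := by
          congr 1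
          rw [hBdef, mul_sum, ← sum_neg_distrib]
  have hmono2 : (1 - Real.exp (-(α * B))) / α ≤ (1 / α) * (1 - ∏ j ∈ range ℓ, c j) := by
    rw [one_div_mul_eq_div]
    gcongr
  calc ((1 - Real.exp (-(α * B))) / α) * (A / B)
      ≤ ((1 / α) * (1 - ∏ j ∈ range ℓ, c j)) * (A / B) :=
        mul_le_mul_of_nonneg_right hmono2 (div_nonneg hA hB.le)
    _ ≤ T := part1

lemma aux_iio_map {ℓ : ℕ} (j : Fin ℓ) :
    (Finset.Iio j).map Fin.valEmbedding = Finset.range (j : ℕ) := by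
  ext n
  simp only [Finset.mem_map, Finset.mem_Iio, Fin.valEmbedding_apply, Finset.mem_range]
  constructor
  · rintro ⟨i, hi, rfl⟩; exact hi
  · intro hn; exact ⟨⟨n, lt_trans hn j.isLt⟩, hn, rfl⟩


/-- if `α·(x_1 + … + x_{j−1}) + k_j·x_j ≥ r_j` for every `j`, then the sum
of the `x_j` is bounded below by `(1/α)·(1 − Π_j (1 − α/k_j))` times the weighted average
of the scores, and consequently by `((1 − e^{−α·Σ_j 1/k_j})/α)` times the same average. -/
theorem stmt18 {ℓ : ℕ} (hℓ : 1 ≤ ℓ) (α : ℝ) (hα0 : 0 < α) (hα1 : α ≤ 1)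
    (k : Fin ℓ → ℕ) (hk : ∀ j, 1 ≤ k j)
    (r : Fin ℓ → ℝ) (hr0 : ∀ j, 0 ≤ r j) (hrmono : Monotone r)
    (x : Fin ℓ → ℝ)
    (hx : ∀ j : Fin ℓ, r j ≤ α * (∑ i ∈ Finset.Iio j, x i) + (k j : ℝ) * x j) :
    (1 / α) * (1 - ∏ j : Fin ℓ, (1 - α / (k j : ℝ))) *
        ((∑ j : Fin ℓ, r j / (k j : ℝ)) / ∑ j : Fin ℓ, ((k j : ℝ))⁻¹) ≤ ∑ j : Fin ℓ, x j
    ∧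
    ((1 - Real.exp (-(α * ∑ j : Fin ℓ, ((k j : ℝ))⁻¹))) / α) *
        ((∑ j : Fin ℓ, r j / (k j : ℝ)) / ∑ j : Fin ℓ, ((k j : ℝ))⁻¹) ≤ ∑ j : Fin ℓ, x j := by
  set K : ℕ → ℕ := fun n => if h : n < ℓ then k ⟨n, h⟩ else 1 with hKdef
  set R : ℕ → ℝ := fun n => if h : n < ℓ then r ⟨n, h⟩ else 0 with hRdef
  set X : ℕ → ℝ := fun n => if h : n < ℓ then x ⟨n, h⟩ else 0 with hXdef
  have hKval : ∀ j : Fin ℓ, K (j : ℕ) = k j := fun j => by simp [hKdef, j.isLt]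
  have hRval : ∀ j : Fin ℓ, R (j : ℕ) = r j := fun j => by simp [hRdef, j.isLt]
  have hXval : ∀ j : Fin ℓ, X (j : ℕ) = x j := fun j => by simp [hXdef, j.isLt]
  have hK' : ∀ i, 1 ≤ K i := by
    intro i; rw [hKdef]; dsimp only
    split
    · exact hk _
    · exact le_refl 1
  have hR0' : ∀ j, 0 ≤ R j := by
    intro i; rw [hRdef]; dsimp only
    split
    · exact hr0 _
    · exact le_refl 0
  have hRmono' : ∀ i j, i ≤ j → j < ℓ → R i ≤ R j := by
    intro i j hij hj
    have hi : i < ℓ := lt_of_le_of_lt hij hj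
    have := hrmono (show (⟨i, hi⟩ : Fin ℓ) ≤ ⟨j, hj⟩ from hij)
    simpa [hRdef, hi, hj] using this
  have hIio : ∀ j : Fin ℓ, ∑ i ∈ Finset.Iio j, x i = ∑ i ∈ range (j : ℕ), X i := by
    intro j
    rw [← aux_iio_map j, sum_map]
    exact (sum_congr rfl fun i _ => hXval i).symm
  have hx' : ∀ j < ℓ, R j ≤ α * (∑ i ∈ range j, X i) + (K j : ℝ) * X j := by
    intro j hj
    have h := hx ⟨j, hj⟩
    rw [hIio ⟨j, hj⟩] at h
    simpa [hKval ⟨j, hj⟩, hRval ⟨j, hj⟩, hXval ⟨j, hj⟩] using h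
  have hmain := aux_assembled ℓ hℓ α hα0 hα1 K hK' R X hR0' hRmono' hx'
  have e1 : ∏ j : Fin ℓ, (1 - α / (k j : ℝ)) = ∏ j ∈ range ℓ, (1 - α / (K j : ℝ)) := by
    rw [← Fin.prod_univ_eq_prod_range (fun n => 1 - α / (K n : ℝ)) ℓ]
    exact prod_congr rfl fun j _ => by rw [hKval j]
  have e2 : ∑ j : Fin ℓ, r j / (k j : ℝ) = ∑ j ∈ range ℓ, R j / (K j : ℝ) := by
    rw [← Fin.sum_univ_eq_sum_range (fun n => R n / (K n : ℝ)) ℓ]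
    exact sum_congr rfl fun j _ => by rw [hKval j, hRval j]
  have e3 : ∑ j : Fin ℓ, ((k j : ℝ))⁻¹ = ∑ j ∈ range ℓ, ((K j : ℝ))⁻¹ := by
    rw [← Fin.sum_univ_eq_sum_range (fun n => ((K n : ℝ))⁻¹) ℓ]
    exact sum_congr rfl fun j _ => by rw [hKval j]
  have e4 : ∑ j : Fin ℓ, x j = ∑ j ∈ range ℓ, X j := by
    rw [← Fin.sum_univ_eq_sum_range X ℓ]
    exact sum_congr rfl fun j _ => (hXval j).symm
  rw [e1, e2, e3, e4]
  exact hmain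
end
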